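/- Assume the intensity measure density is log-normal: p(a) = (√(2πσ²)·a)^{-1}·exp(-(log a - μ)²/(2σ²)) on (0,∞), with parameters μ ∈ ℝ, σ > 0. Let J(θ) be the Jeffreys prior, J(θ)² = |A_{01,02}·A_{21,22} − A_{11,12}²| / (α²β⁶), where for k = 0,1,2, A_{k1,k2}(α,β) = ∫_0^∞ log^k(a/α)·Φ'(γ(a))²/[Φ(γ(a))(1-Φ(γ(a)))]·p(a) da, γ(a) = (log a - log α)/β, Φ'(x) = (2π)^{-1/2}exp(-x²/2). Then for each fixed α > 0, J((α,β)) ~ E'/(αβ³) as β → ∞, where E' = 2σ/π. -/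

import Mathlib

/-!
After the substitution `a = exp x`, each `A_k` is the expectation of `Y ^ k * w (Y / β)` for
`Y ~ N(μ - log α, σ²)`, where `w = Φ'² / (Φ (1 - Φ))`. The weight `w` is continuous and bounded,
with `w 0 = 2 / π`, so by dominated convergence `A_k → (2 / π) E[Y ^ k]` as `β → ∞`. Hence
`A₀ A₂ - A₁² → (2 / π)² Var Y = (2σ / π)²`, and `J = √|A₀ A₂ - A₁²| / (α β³)`.
-/

open MeasureTheory Real Filter Set

/-- The standard Gaussian cumulative distribution function. -/
noncomputable def Phi (x : ℝ) : ℝ :=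
  (Real.sqrt (2 * Real.pi))⁻¹ * ∫ t in Set.Iic x, Real.exp (-t ^ 2 / 2)

/-- The standard Gaussian density `Φ'(x) = (2π)^{-1/2} exp(-x²/2)`. -/
noncomputable def Phi' (x : ℝ) : ℝ :=
  (Real.sqrt (2 * Real.pi))⁻¹ * Real.exp (-x ^ 2 / 2)

/-- The log-normal intensity measure density
`p(a) = (√(2πσ²)·a)⁻¹ exp(-(log a - μ)²/(2σ²))`. -/
noncomputable def pLN (μ σ a : ℝ) : ℝ :=
  (Real.sqrt (2 * Real.pi * σ ^ 2) * a)⁻¹ * Real.exp (-(Real.log a - μ) ^ 2 / (2 * σ ^ 2))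

/-- `A_{k1,k2}(α,β) = ∫₀^∞ log^k(a/α)·Φ'(γ(a))²/[Φ(γ(a))(1-Φ(γ(a)))]·p(a) da`
with `γ(a) = (log a - log α)/β`. -/
noncomputable def A (μ σ : ℝ) (k : ℕ) (α β : ℝ) : ℝ :=
  ∫ a in Set.Ioi (0 : ℝ),
    Real.log (a / α) ^ k *
      (Phi' ((Real.log a - Real.log α) / β) ^ 2 /
        (Phi ((Real.log a - Real.log α) / β) *
          (1 - Phi ((Real.log a - Real.log α) / β)))) * pLN μ σ a

/-- The Jeffreys prior, `J(θ) = √(|A₀₁,₀₂·A₂₁,₂₂ − A₁₁,₁₂²| / (α²β⁶))`. -/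
noncomputable def Jeff (μ σ α β : ℝ) : ℝ :=
  Real.sqrt (|A μ σ 0 α β * A μ σ 2 α β - A μ σ 1 α β ^ 2| / (α ^ 2 * β ^ 6))

open ProbabilityTheory Topology
open scoped NNReal

lemma integrable_exp_neg_sq_div_two : Integrable fun t : ℝ => exp (-t ^ 2 / 2) := by
  simpa [neg_div, div_eq_inv_mul] using integrable_exp_neg_mul_sq (b := 1 / 2) (by norm_num)

lemma integral_exp_neg_sq_div_two : ∫ t : ℝ, exp (-t ^ 2 / 2) = √(2 * π) := by
  simpa [neg_div, div_eq_inv_mul, div_div_eq_mul_div, mul_comm] using integral_gaussian (1 / 2)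

lemma setIntegral_exp_neg_sq_div_two_pos {s : Set ℝ} (hs : volume s ≠ 0) :
    0 < ∫ t in s, exp (-t ^ 2 / 2) := by
  rw [setIntegral_pos_iff_support_of_nonneg_ae (ae_of_all _ fun _ => (exp_pos _).le)
    integrable_exp_neg_sq_div_two.integrableOn]
  simpa [Function.support, (exp_pos _).ne', pos_iff_ne_zero] using hs

lemma one_sub_Phi (x : ℝ) : 1 - Phi x = (√(2 * π))⁻¹ * ∫ t in Ioi x, exp (-t ^ 2 / 2) := by
  have hsplit := setIntegral_union (Iic_disjoint_Ioi (le_refl x)) measurableSet_Ioi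
    integrable_exp_neg_sq_div_two.integrableOn integrable_exp_neg_sq_div_two.integrableOn
  rw [Iic_union_Ioi, setIntegral_univ, integral_exp_neg_sq_div_two] at hsplit
  have hpos : 0 < √(2 * π) := by positivity
  rw [Phi, eq_inv_mul_iff_mul_eq₀ hpos.ne', mul_sub, ← mul_assoc, mul_inv_cancel₀ hpos.ne']
  linarith

lemma Phi_pos (x : ℝ) : 0 < Phi x :=
  mul_pos (by positivity) (setIntegral_exp_neg_sq_div_two_pos (by simp))

lemma Phi_lt_one (x : ℝ) : Phi x < 1 := by
  have := one_sub_Phi x ▸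
    mul_pos (by positivity) (setIntegral_exp_neg_sq_div_two_pos (by simp))
  linarith

lemma Phi_neg (x : ℝ) : Phi (-x) = 1 - Phi x := by
  rw [one_sub_Phi, Phi, ← integral_comp_neg_Ioi]
  simp only [neg_sq]

lemma Phi_zero : Phi 0 = 1 / 2 := by
  linarith [neg_zero (G := ℝ) ▸ Phi_neg 0]

lemma monotone_Phi : Monotone Phi := fun _ _ hxy =>
  mul_le_mul_of_nonneg_left (setIntegral_mono_set integrable_exp_neg_sq_div_two.integrableOn
    (ae_of_all _ fun _ => (exp_pos _).le) (Iic_subset_Iic.2 hxy).eventuallyLE) (by positivity)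

lemma continuous_Phi : Continuous Phi := by
  have hPhi : Phi = fun x => (√(2 * π))⁻¹ *
      ((∫ t in Iic 0, exp (-t ^ 2 / 2)) + ∫ t in (0 : ℝ)..x, exp (-t ^ 2 / 2)) := by
    ext x
    rw [Phi, ← intervalIntegral.integral_Iic_sub_Iic integrable_exp_neg_sq_div_two.integrableOn
      integrable_exp_neg_sq_div_two.integrableOn, add_sub_cancel]
  rw [hPhi]
  exact continuous_const.mul
    (continuous_const.add (integrable_exp_neg_sq_div_two.continuous_primitive 0))

lemma exp_neg_add_one_sq_le_integral_Ioi {y : ℝ} (hy : 0 ≤ y) :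
    exp (-(y + 1) ^ 2 / 2) ≤ ∫ t in Ioi y, exp (-t ^ 2 / 2) := by
  have hIoc : exp (-(y + 1) ^ 2 / 2) ≤ ∫ t in Ioc y (y + 1), exp (-t ^ 2 / 2) := by
    have := setIntegral_ge_of_const_le_real (s := Ioc y (y + 1)) (f := fun t => exp (-t ^ 2 / 2))
      (c := exp (-(y + 1) ^ 2 / 2)) measurableSet_Ioc (by simp)
      (fun t ht => exp_le_exp.2 (by nlinarith [ht.1, ht.2]))
      integrable_exp_neg_sq_div_two.integrableOn
    rwa [volume_real_Ioc_of_le (by linarith), add_sub_cancel_left, mul_one] at this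
  exact hIoc.trans (setIntegral_mono_set integrable_exp_neg_sq_div_two.integrableOn
    (ae_of_all _ fun _ => (exp_pos _).le) Ioc_subset_Ioi_self.eventuallyLE)

noncomputable def probitWeight (y : ℝ) : ℝ := Phi' y ^ 2 / (Phi y * (1 - Phi y))

lemma Phi_mul_one_sub_pos (y : ℝ) : 0 < Phi y * (1 - Phi y) :=
  mul_pos (Phi_pos y) (sub_pos.2 (Phi_lt_one y))

lemma probitWeight_nonneg (y : ℝ) : 0 ≤ probitWeight y :=
  div_nonneg (sq_nonneg _) (Phi_mul_one_sub_pos y).le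

lemma probitWeight_neg (y : ℝ) : probitWeight (-y) = probitWeight y := by
  rw [probitWeight, probitWeight, Phi', Phi', neg_sq, Phi_neg, sub_sub_cancel, mul_comm (1 - Phi y)]

lemma continuous_probitWeight : Continuous probitWeight :=
  ((continuous_const.mul (continuous_exp.comp (by fun_prop))).pow 2).div
    (continuous_Phi.mul (continuous_const.sub continuous_Phi)) fun y => (Phi_mul_one_sub_pos y).ne'

lemma probitWeight_zero : probitWeight 0 = 2 / π := by
  have h2π : (0 : ℝ) ≤ 2 * π := by positivity
  rw [probitWeight, Phi', Phi_zero]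
  simp only [ne_eq, OfNat.ofNat_ne_zero, not_false_eq_true, zero_pow, neg_zero, zero_div, exp_zero,
    mul_one, inv_pow, sq_sqrt h2π]
  field_simp
  ring

-- With `Φ(y) ≥ 1/2`, the tail bound `1 - Φ(y) ≥ Φ'(y + 1)` absorbs `Φ'(y)² ≤ e Φ'(0) Φ'(y + 1)`.
lemma probitWeight_le_of_nonneg {y : ℝ} (hy : 0 ≤ y) :
    probitWeight y ≤ 2 * (√(2 * π))⁻¹ * exp 1 := by
  set N := (√(2 * π))⁻¹
  have hN : 0 < N := by positivity
  have htail : N * exp (-(y + 1) ^ 2 / 2) ≤ 1 - Phi y := by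
    rw [one_sub_Phi]
    exact mul_le_mul_of_nonneg_left (exp_neg_add_one_sq_le_integral_Ioi hy) hN.le
  have hhalf : 1 / 2 ≤ Phi y := Phi_zero ▸ monotone_Phi hy
  have hden : 1 / 2 * (N * exp (-(y + 1) ^ 2 / 2)) ≤ Phi y * (1 - Phi y) :=
    mul_le_mul hhalf htail (by positivity) (Phi_pos y).le
  rw [probitWeight, div_le_iff₀ (Phi_mul_one_sub_pos y)]
  calc Phi' y ^ 2 = N ^ 2 * exp (-y ^ 2) := by
        rw [Phi', mul_pow, ← exp_nat_mul]
        congr 2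
        ring
    _ ≤ N ^ 2 * (exp 1 * exp (-(y + 1) ^ 2 / 2)) := by
        rw [← exp_add]
        gcongr
        nlinarith [sq_nonneg (y - 1)]
    _ = 2 * N * exp 1 * (1 / 2 * (N * exp (-(y + 1) ^ 2 / 2))) := by ring
    _ ≤ 2 * N * exp 1 * (Phi y * (1 - Phi y)) := by gcongr

lemma probitWeight_le (y : ℝ) : probitWeight y ≤ 2 * (√(2 * π))⁻¹ * exp 1 := by
  rcases le_total 0 y with hy | hy
  · exact probitWeight_le_of_nonneg hy
  · exact probitWeight_neg y ▸ probitWeight_le_of_nonneg (neg_nonneg.2 hy)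

lemma exp_mul_pLN_exp (μ σ x : ℝ) :
    exp x * pLN μ σ (exp x) = gaussianPDFReal μ (σ ^ 2).toNNReal x := by
  rw [pLN, gaussianPDFReal_def, log_exp, coe_toNNReal _ (sq_nonneg σ), mul_inv, ← mul_assoc,
    ← mul_assoc, mul_comm (exp x), mul_assoc _ (exp x), mul_inv_cancel₀ (exp_ne_zero x), mul_one]

lemma A_eq_integral_gaussianReal (μ : ℝ) {σ : ℝ} (hσ : σ ≠ 0) (k : ℕ) {α : ℝ} (hα : α ≠ 0)
    (β : ℝ) : A μ σ k α β =
      ∫ y, y ^ k * probitWeight (y / β) ∂gaussianReal (μ - log α) (σ ^ 2).toNNReal := by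
  have hv : (σ ^ 2).toNNReal ≠ 0 := by simpa using hσ
  let f : ℝ → ℝ := fun y =>
    gaussianPDFReal (μ - log α) (σ ^ 2).toNNReal y * (y ^ k * probitWeight (y / β))
  calc A μ σ k α β = ∫ x, f (x - log α) := by
        simp only [f]
        rw [A, ← range_exp, ← image_univ, integral_image_eq_integral_abs_deriv_smul
          MeasurableSet.univ (fun x _ => (hasDerivAt_exp x).hasDerivWithinAt) exp_injective.injOn,
          setIntegral_univ]
        congr 1 with x
        rw [smul_eq_mul, abs_of_pos (exp_pos x), log_div (exp_ne_zero x) hα, log_exp,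
          gaussianPDFReal_sub, sub_add_cancel, ← exp_mul_pLN_exp, probitWeight]
        ring
    _ = ∫ y, f y := integral_sub_right_eq_self f (log α)
    _ = _ := (integral_gaussianReal_eq_integral_smul hv).symm

lemma tendsto_integral_mul_comp_div_atTop {P : Measure ℝ} {f G : ℝ → ℝ} (hf : Integrable f P)
    (hGm : Measurable G) (hG0 : ContinuousAt G 0) {C : ℝ} (hGC : ∀ y, |G y| ≤ C) :
    Tendsto (fun β => ∫ x, f x * G (x / β) ∂P) atTop (𝓝 ((∫ x, f x ∂P) * G 0)) := by
  rw [← integral_mul_const]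
  refine tendsto_integral_filter_of_dominated_convergence (fun x => |f x| * C)
    (Eventually.of_forall fun β => hf.aestronglyMeasurable.mul
      (hGm.comp (measurable_id.div_const β)).aestronglyMeasurable)
    (Eventually.of_forall fun β => ae_of_all _ fun x => ?_) (hf.abs.mul_const C)
    (ae_of_all _ fun x => ?_)
  · rw [norm_mul, norm_eq_abs, norm_eq_abs]
    exact mul_le_mul_of_nonneg_left (hGC _) (abs_nonneg _)
  · exact (hG0.tendsto.comp (tendsto_const_nhds.div_atTop tendsto_id)).const_mul (f x)

lemma integrable_pow_gaussianReal (m : ℝ) (v : ℝ≥0) (k : ℕ) :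
    Integrable (fun x => x ^ k) (gaussianReal m v) :=
  integrable_pow_of_mem_interior_integrableExpSet (by simp) k

lemma integral_sq_gaussianReal (m : ℝ) (v : ℝ≥0) : ∫ x, x ^ 2 ∂gaussianReal m v = v + m ^ 2 := by
  have h := variance_eq_sub (memLp_id_gaussianReal' (μ := m) (v := v) 2 (by simp))
  simp only [variance_id_gaussianReal, Pi.pow_apply, id_eq, integral_id_gaussianReal] at h
  linarith

lemma tendsto_A_atTop (μ : ℝ) {σ : ℝ} (hσ : σ ≠ 0) (k : ℕ) {α : ℝ} (hα : α ≠ 0) :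
    Tendsto (fun β => A μ σ k α β) atTop
      (𝓝 ((∫ y, y ^ k ∂gaussianReal (μ - log α) (σ ^ 2).toNNReal) * (2 / π))) := by
  simp_rw [A_eq_integral_gaussianReal μ hσ k hα, ← probitWeight_zero]
  exact tendsto_integral_mul_comp_div_atTop (integrable_pow_gaussianReal _ _ k)
    continuous_probitWeight.measurable continuous_probitWeight.continuousAt
    fun y => (abs_of_nonneg (probitWeight_nonneg y)).trans_le (probitWeight_le y)

lemma tendsto_A_det_atTop (μ : ℝ) {σ : ℝ} (hσ : σ ≠ 0) {α : ℝ} (hα : α ≠ 0) :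
    Tendsto (fun β => A μ σ 0 α β * A μ σ 2 α β - A μ σ 1 α β ^ 2) atTop
      (𝓝 ((2 * σ / π) ^ 2)) := by
  convert ((tendsto_A_atTop μ hσ 0 hα).mul (tendsto_A_atTop μ hσ 2 hα)).sub
    ((tendsto_A_atTop μ hσ 1 hα).pow 2) using 2
  simp only [pow_zero, integral_const, probReal_univ, smul_eq_mul, mul_one, pow_one,
    integral_id_gaussianReal, integral_sq_gaussianReal, coe_toNNReal _ (sq_nonneg σ)]
  ring

lemma Jeff_eq_sqrt_abs_div {α β : ℝ} (hα : 0 < α) (hβ : 0 < β) (μ σ : ℝ) :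
    Jeff μ σ α β = √|A μ σ 0 α β * A μ σ 2 α β - A μ σ 1 α β ^ 2| / (α * β ^ 3) := by
  rw [Jeff, sqrt_div (abs_nonneg _), show α ^ 2 * β ^ 6 = (α * β ^ 3) ^ 2 by ring,
    sqrt_sq (by positivity)]

/-- For the log-normal IM density and each fixed `α > 0`,
`J((α,β)) ~ E'/(αβ³)` as `β → ∞`, where `E' = 2σ/π`. -/
theorem stmt11 (μ σ : ℝ) (hσ : 0 < σ) (α : ℝ) (hα : 0 < α) :
    Filter.Tendsto (fun β : ℝ => Jeff μ σ α β / (2 * σ / Real.pi / (α * β ^ 3)))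
      Filter.atTop (nhds 1) := by
  have hE : 0 < 2 * σ / π := by positivity
  have hdet := ((tendsto_A_det_atTop μ hσ.ne' hα.ne').abs.sqrt).div_const (2 * σ / π)
  rw [abs_of_nonneg (sq_nonneg _), sqrt_sq hE.le, div_self hE.ne'] at hdet
  refine hdet.congr' ?_
  filter_upwards [eventually_gt_atTop 0] with β hβ
  rw [Jeff_eq_sqrt_abs_div hα hβ]
  field_simp
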